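/- For a field R and n ≥ 2, the range of the embedding θ ↦ M_n(θ,R) from preorders on Fin n to subrings of Matrix (Fin n) (Fin n) R is order-convex: if M_n(θ₁,R) ⊆ N ⊆ M_n(θ₂,R) for preorders θ₁, θ₂ and a subring N, then N = M_n(θ,R) for some preorder θ. -/

import Mathlib

/-!
Every subring `N` of `Mₙ(R)` containing the diagonal matrices is structural, for the relation
`θ i j :↔ Eᵢⱼ ∈ N`. Multiplying `A ∈ N` by the diagonal idempotents `Eᵢᵢ`, `Eⱼⱼ` cuts out the entry
`A i j • Eᵢⱼ`, and rescaling by a diagonal matrix gives `Eᵢⱼ ∈ N` whenever `A i j ≠ 0`; conversely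
`A = ∑ A i j • Eᵢⱼ`. This relation is reflexive because `Eᵢᵢ` is diagonal and transitive because
`Eᵢⱼ Eⱼₖ = Eᵢₖ`. A subring containing `M_n(θ₁,R)` with `θ₁` reflexive contains all diagonal matrices.
-/

open Matrix

section

variable {ι R : Type*} [DecidableEq ι]

/-- The structural matrix set `M(θ, R)`. -/
def structuralMatrices (R : Type*) [Zero R] (θ : ι → ι → Prop) : Set (Matrix ι ι R) :=
  {A | ∀ i j, A i j ≠ 0 → θ i j}

theorem diagonal_mem_structuralMatrices [Zero R] {θ : ι → ι → Prop} (hθ : Reflexive θ)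
    (d : ι → R) : diagonal d ∈ structuralMatrices R θ := by
  intro i j hij
  obtain rfl : i = j := by_contra fun h => hij (diagonal_apply_ne d h)
  exact hθ i

namespace Subring

variable [Fintype ι]

section Ring

variable [Ring R] {N : Subring (Matrix ι ι R)}

theorem single_same_mem_of_diagonal_mem (hdiag : ∀ d : ι → R, diagonal d ∈ N) (i : ι) (a : R) :
    single i i a ∈ N :=
  diagonal_single i a ▸ hdiag _

theorem single_mem_of_single_one_mem (hdiag : ∀ d : ι → R, diagonal d ∈ N) (i j : ι) (a : R)
    (h : single i j 1 ∈ N) : single i j a ∈ N := by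
  simpa [← smul_eq_diagonal_mul] using N.mul_mem (hdiag fun _ => a) h

theorem mem_of_single_one_mem (hdiag : ∀ d : ι → R, diagonal d ∈ N) {A : Matrix ι ι R}
    (h : ∀ i j, A i j ≠ 0 → single i j 1 ∈ N) : A ∈ N := by
  rw [matrix_eq_sum_single A]
  refine N.sum_mem fun i _ => N.sum_mem fun j _ => ?_
  by_cases hij : A i j = 0
  · simp [hij]
  · exact single_mem_of_single_one_mem hdiag i j _ (h i j hij)

end Ring

section DivisionRing

variable [DivisionRing R] {N : Subring (Matrix ι ι R)}

theorem single_one_mem_of_apply_ne_zero (hdiag : ∀ d : ι → R, diagonal d ∈ N)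
    {A : Matrix ι ι R} (hA : A ∈ N) {i j : ι} (hij : A i j ≠ 0) : single i j 1 ∈ N := by
  have hcut : single i i 1 * A * single j j 1 ∈ N :=
    N.mul_mem (N.mul_mem (single_same_mem_of_diagonal_mem hdiag i 1) hA)
      (single_same_mem_of_diagonal_mem hdiag j 1)
  rw [single_mul_mul_single, one_mul, mul_one] at hcut
  simpa [← smul_eq_diagonal_mul, inv_mul_cancel₀ hij] using
    N.mul_mem (hdiag fun _ => (A i j)⁻¹) hcut

theorem exists_preorder_coe_eq_structuralMatrices (hdiag : ∀ d : ι → R, diagonal d ∈ N) :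
    ∃ θ : ι → ι → Prop, Reflexive θ ∧ Transitive θ ∧
      (N : Set (Matrix ι ι R)) = structuralMatrices R θ := by
  refine ⟨fun i j => single i j (1 : R) ∈ N, fun i => single_same_mem_of_diagonal_mem hdiag i 1,
    fun i j k hij hjk => ?_, ?_⟩
  · simpa using N.mul_mem hij hjk
  · ext A
    exact ⟨fun hA i j => single_one_mem_of_apply_ne_zero hdiag hA,
      mem_of_single_one_mem hdiag⟩

end DivisionRing

end Subring

end

theorem structural_matrix_ring_range_order_convex_general
    (R : Type*) [Field R] (n : ℕ)
    (θ₁ : Fin n → Fin n → Prop)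
    (h₁r : Reflexive θ₁)
    (N : Subring (Matrix (Fin n) (Fin n) R))
    (h₁ : {A : Matrix (Fin n) (Fin n) R | ∀ i j, A i j ≠ 0 → θ₁ i j} ⊆ (N : Set _)) :
    ∃ θ : Fin n → Fin n → Prop, Reflexive θ ∧ Transitive θ ∧
      (N : Set (Matrix (Fin n) (Fin n) R)) =
        {A | ∀ i j, A i j ≠ 0 → θ i j} :=
  N.exists_preorder_coe_eq_structuralMatrices fun d =>
    h₁ (diagonal_mem_structuralMatrices h₁r d)

theorem structural_matrix_ring_range_order_convex
    (R : Type*) [Field R] (n : ℕ) (hn : 2 ≤ n)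
    (θ₁ θ₂ : Fin n → Fin n → Prop)
    (h₁r : Reflexive θ₁) (h₁t : Transitive θ₁)
    (h₂r : Reflexive θ₂) (h₂t : Transitive θ₂)
    (N : Subring (Matrix (Fin n) (Fin n) R))
    (h₁ : {A : Matrix (Fin n) (Fin n) R | ∀ i j, A i j ≠ 0 → θ₁ i j} ⊆ (N : Set _))
    (h₂ : (N : Set (Matrix (Fin n) (Fin n) R)) ⊆
        {A | ∀ i j, A i j ≠ 0 → θ₂ i j}) :
    ∃ θ : Fin n → Fin n → Prop, Reflexive θ ∧ Transitive θ ∧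
      (N : Set (Matrix (Fin n) (Fin n) R)) =
        {A | ∀ i j, A i j ≠ 0 → θ i j} :=
  structural_matrix_ring_range_order_convex_general R n θ₁ h₁r N h₁
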